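/- arXiv:2205.12126 — 2 statements merged into one kernel-verified Lean document; each statement's English description precedes it below -/
import Mathlib

section
/- Let S be a symmetric N×N real matrix, σ² a real number, and Λ an N×r matrix with full column rank satisfying SΛ = Λ(ΛᵀΛ + σ²I_r). If ΛᵀΛ is diagonal, then each column Λ_l of Λ is an eigenvector of S with eigenvalue ΛₗᵀΛₗ + σ², and distinct columns of Λ are orthogonal. -/
open Matrix

/-- If `S` is symmetric, `Λ` has full column rank, `SΛ = Λ(ΛᵀΛ + σ²I)` and `ΛᵀΛ` is
diagonal, then each column `Λ_l` of `Λ` is an eigenvector of `S` with eigenvalue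
`ΛₗᵀΛₗ + σ²`, and distinct columns of `Λ` are orthogonal. -/
theorem columns_eigenvectors_of_foc (N r : ℕ) (S : Matrix (Fin N) (Fin N) ℝ)
    (hSsym : Sᵀ = S) (σ2 : ℝ) (Λ : Matrix (Fin N) (Fin r) ℝ)
    (hrank : IsUnit (Λᵀ * Λ).det)
    (hfoc : S * Λ = Λ * (Λᵀ * Λ + σ2 • (1 : Matrix (Fin r) (Fin r) ℝ)))
    (hdiag : (Λᵀ * Λ).IsDiag) :
    (∀ l : Fin r, S *ᵥ (Λᵀ l) = ((Λᵀ * Λ) l l + σ2) • (Λᵀ l)) ∧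
    (∀ l l' : Fin r, l ≠ l' → (Λᵀ l) ⬝ᵥ (Λᵀ l') = 0) := by
  constructor
  · intro l
    funext i
    have hLHS : (S *ᵥ Λᵀ l) i = (S * Λ) i l := by
      simp [Matrix.mulVec, dotProduct, Matrix.mul_apply, Matrix.transpose_apply]
    have hRHS : (Λ * (Λᵀ * Λ + σ2 • (1 : Matrix (Fin r) (Fin r) ℝ))) i l
        = Λ i l * ((Λᵀ * Λ) l l + σ2) := by
      rw [Matrix.mul_apply, Finset.sum_eq_single l]
      · simp
      · intro k _ hk
        simp only [Matrix.add_apply, Matrix.smul_apply, Matrix.one_apply, smul_eq_mul]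
        rw [hdiag hk, if_neg hk]
        ring
      · simp
    rw [hLHS, hfoc, hRHS]
    simp [mul_comm]
  · intro l l' hne
    simpa [Matrix.mul_apply, dotProduct] using hdiag hne
end

section
/- Let Σ_j = Λ_jΛ_jᵀ + σ²I_N with σ² > 0, and suppose Σ_j⁻¹Λ_j = Σ_j⁻¹SΣ_j⁻¹Λ_j for a symmetric N×N matrix S. Then SΛ_j = Λ_j(Λ_jᵀΛ_j + σ²I_r). -/
open Matrix

/-- Let `Σ_j = Λ_jΛ_jᵀ + σ²I` with `σ² > 0` and `S` symmetric. If
`Σ_j⁻¹Λ_j = Σ_j⁻¹ S Σ_j⁻¹ Λ_j`, then `SΛ_j = Λ_j(Λ_jᵀΛ_j + σ²I_r)`. -/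
theorem foc_from_stationarity (N r : ℕ) (Λ : Matrix (Fin N) (Fin r) ℝ)
    (σ2 : ℝ) (hσ : 0 < σ2) (S : Matrix (Fin N) (Fin N) ℝ) (hS : Sᵀ = S)
    (h : (Λ * Λᵀ + σ2 • (1 : Matrix (Fin N) (Fin N) ℝ))⁻¹ * Λ
        = (Λ * Λᵀ + σ2 • (1 : Matrix (Fin N) (Fin N) ℝ))⁻¹ * S *
            ((Λ * Λᵀ + σ2 • (1 : Matrix (Fin N) (Fin N) ℝ))⁻¹ * Λ)) :
    S * Λ = Λ * (Λᵀ * Λ + σ2 • (1 : Matrix (Fin r) (Fin r) ℝ)) := by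
  set Sg : Matrix (Fin N) (Fin N) ℝ := Λ * Λᵀ + σ2 • 1 with hSg
  have hsd : (σ2 • (1 : Matrix (Fin N) (Fin N) ℝ)) = diagonal (fun _ => σ2) := by
    ext i j
    by_cases hij : i = j <;> simp [Matrix.one_apply, diagonal, hij]
  have hpd : Sg.PosDef := by
    refine Matrix.PosDef.posSemidef_add ?_ ?_
    · simpa using Matrix.posSemidef_self_mul_conjTranspose Λ
    · rw [hsd]; exact Matrix.posDef_diagonal_iff.mpr fun _ => hσ
  have hdu : IsUnit Sg.det := (Matrix.isUnit_iff_isUnit_det Sg).1 hpd.isUnit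
  have hinv : Sg * Sg⁻¹ = 1 := Matrix.mul_nonsing_inv Sg hdu
  have hinv' : Sg⁻¹ * Sg = 1 := Matrix.nonsing_inv_mul Sg hdu
  have h1 : Λ = S * (Sg⁻¹ * Λ) := by
    calc Λ = Sg * (Sg⁻¹ * Λ) := by rw [← Matrix.mul_assoc, hinv, Matrix.one_mul]
      _ = Sg * (Sg⁻¹ * S * (Sg⁻¹ * Λ)) := by conv_lhs => rw [h]
      _ = S * (Sg⁻¹ * Λ) := by
          rw [← Matrix.mul_assoc, ← Matrix.mul_assoc, ← Matrix.mul_assoc, hinv, Matrix.one_mul,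
            Matrix.mul_assoc]
  have h2 : Sg * Λ = Λ * (Λᵀ * Λ + σ2 • 1) := by
    rw [hSg, Matrix.add_mul, Matrix.mul_add, Matrix.mul_assoc, Matrix.smul_mul, Matrix.mul_smul,
      Matrix.one_mul, Matrix.mul_one]
  calc S * Λ = S * (Sg⁻¹ * (Sg * Λ)) := by
        rw [← Matrix.mul_assoc Sg⁻¹, hinv', Matrix.one_mul]
    _ = S * (Sg⁻¹ * (Λ * (Λᵀ * Λ + σ2 • 1))) := by rw [h2]
    _ = (S * (Sg⁻¹ * Λ)) * (Λᵀ * Λ + σ2 • 1) := by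
        rw [← Matrix.mul_assoc, ← Matrix.mul_assoc, ← Matrix.mul_assoc, Matrix.mul_assoc S]
    _ = Λ * (Λᵀ * Λ + σ2 • 1) := by rw [← h1]
end
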